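/- arXiv:2007.07316 — 5 statements merged into one kernel-verified Lean document; each statement's English description precedes it below -/
import Mathlib

section
/- For real numbers a₁ ≥ a₂, b₁ ≥ b₂, and p ≥ 1, we have |a₁ - b₁|^p + |a₂ - b₂|^p ≤ |a₁ - b₂|^p + |a₂ - b₁|^p. -/
open Set

theorem convexOn_norm_rpow {E : Type*} [SeminormedAddCommGroup E] [NormedSpace ℝ E] {p : ℝ}
    (hp : 1 ≤ p) : ConvexOn ℝ univ fun x : E => ‖x‖ ^ p := by
  refine ⟨convex_univ, fun x _ y _ a b ha hb hab => ?_⟩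
  have htri : ‖a • x + b • y‖ ≤ a * ‖x‖ + b * ‖y‖ := by
    simpa [norm_smul, abs_of_nonneg ha, abs_of_nonneg hb] using norm_add_le (a • x) (b • y)
  calc ‖a • x + b • y‖ ^ p ≤ (a * ‖x‖ + b * ‖y‖) ^ p :=
        Real.rpow_le_rpow (norm_nonneg _) htri (by linarith)
    _ ≤ a * ‖x‖ ^ p + b * ‖y‖ ^ p :=
        (convexOn_rpow hp).2 (norm_nonneg x) (norm_nonneg y) ha hb hab

theorem convexOn_abs_rpow {p : ℝ} (hp : 1 ≤ p) : ConvexOn ℝ univ fun x : ℝ => |x| ^ p :=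
  convexOn_norm_rpow hp

section LinearOrderedField

variable {𝕜 : Type*} [Field 𝕜] [LinearOrder 𝕜] [IsStrictOrderedRing 𝕜] {s : Set 𝕜} {f : 𝕜 → 𝕜}
  {u v x y : 𝕜}

theorem ConvexOn.mul_le_of_mem_Icc (hf : ConvexOn 𝕜 s f) (hu : u ∈ s) (hv : v ∈ s)
    (hx : x ∈ Icc u v) : (v - u) * f x ≤ (v - x) * f u + (x - u) * f v := by
  obtain ⟨hux, hxv⟩ := hx
  rcases hux.eq_or_lt with rfl | hux
  · simp
  rcases hxv.eq_or_lt with rfl | hxv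
  · simp
  exact hf.secant_mono_aux1 hu hv hux hxv

/-- Karamata's inequality for two points: `(u, v)` majorizes `(x, y)`. -/
theorem ConvexOn.map_add_map_le_of_add_eq (hf : ConvexOn 𝕜 s f) (hu : u ∈ s) (hv : v ∈ s)
    (hux : u ≤ x) (hxv : x ≤ v) (hsum : x + y = u + v) : f x + f y ≤ f u + f v := by
  have hy : y ∈ Icc u v := ⟨by linarith, by linarith⟩
  rcases hux.trans hxv |>.eq_or_lt with rfl | huv
  · obtain rfl : x = u := le_antisymm hxv hux
    obtain rfl : y = x := by linarith
    rfl
  have hfx := hf.mul_le_of_mem_Icc hu hv ⟨hux, hxv⟩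
  have hfy := hf.mul_le_of_mem_Icc hu hv hy
  -- Summing the two chord bounds, `x + y = u + v` makes both weights on the right equal `v - u`.
  refine le_of_mul_le_mul_left ?_ (sub_pos.mpr huv)
  linear_combination hfx + hfy + (f v - f u) * hsum

end LinearOrderedField

theorem rearrangement_abs_rpow (a₁ a₂ b₁ b₂ p : ℝ)
    (ha : a₂ ≤ a₁) (hb : b₂ ≤ b₁) (hp : 1 ≤ p) :
    |a₁ - b₁| ^ p + |a₂ - b₂| ^ p ≤ |a₁ - b₂| ^ p + |a₂ - b₁| ^ p := by
  have := (convexOn_abs_rpow hp).map_add_map_le_of_add_eq (mem_univ (a₂ - b₁))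
    (mem_univ (a₁ - b₂)) (x := a₁ - b₁) (y := a₂ - b₂) (by linarith) (by linarith) (by ring)
  linarith
end

section
/- Let p > 1 and let f(ỹ₁,...,ỹₙ) denote the minimizer of Σᵢ |ỹᵢ - y|^p over y ∈ ℝ. Then f is strictly increasing in each coordinate: if ỹᵢ' > ỹᵢ and all other reports are fixed, then f evaluated at the modified input is strictly larger. -/
/-! A minimiser `z` of `w ↦ ∑ⱼ |yⱼ - w| ^ p` is a critical point, so `∑ⱼ φ (yⱼ - z) = 0` for
`φ t = |t| ^ (p - 2) * t`, the derivative of `|t| ^ p / p`. For `p > 1` the map `φ` is strictly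
increasing. Raising one report while the minimiser does not increase would raise every term of
this sum and one term strictly, so the sum could not vanish at both minimisers. -/

open Finset

lemma abs_rpow_sub_two_mul_of_nonneg {p t : ℝ} (hp : 1 < p) (ht : 0 ≤ t) :
    |t| ^ (p - 2) * t = t ^ (p - 1) := by
  rcases ht.eq_or_lt with rfl | ht
  · rw [mul_zero, Real.zero_rpow (by linarith)]
  · rw [abs_of_pos ht, ← Real.rpow_add_one ht.ne']
    ring_nf

lemma strictMono_abs_rpow_sub_two_mul {p : ℝ} (hp : 1 < p) :
    StrictMono fun t : ℝ ↦ |t| ^ (p - 2) * t := by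
  refine strictMono_of_odd_strictMonoOn_nonneg (fun t ↦ by rw [abs_neg, mul_neg]) ?_
  intro a ha b hb hab
  simp only [abs_rpow_sub_two_mul_of_nonneg hp ha, abs_rpow_sub_two_mul_of_nonneg hp hb]
  exact Real.rpow_lt_rpow ha hab (by linarith)

lemma sum_abs_rpow_sub_two_mul_eq_zero_of_isMinOn {ι : Type*} [Fintype ι] {p : ℝ} (hp : 1 < p)
    (v : ι → ℝ) {z : ℝ} (hz : ∀ w, ∑ j, |v j - z| ^ p ≤ ∑ j, |v j - w| ^ p) :
    ∑ j, |v j - z| ^ (p - 2) * (v j - z) = 0 := by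
  have hderiv : HasDerivAt (fun w ↦ ∑ j, |v j - w| ^ p)
      (∑ j, p * |v j - z| ^ (p - 2) * (v j - z) * (-1)) z :=
    HasDerivAt.fun_sum fun j _ ↦
      (hasDerivAt_abs_rpow (v j - z) hp).comp z ((hasDerivAt_id z).const_sub (v j))
  have hcrit := IsLocalMin.hasDerivAt_eq_zero (.of_forall hz) hderiv
  simp only [mul_neg_one, sum_neg_distrib, neg_eq_zero, mul_assoc, ← mul_sum] at hcrit
  exact (mul_eq_zero.mp hcrit).resolve_left (by linarith)

theorem lp_minimizer_strictly_increasing_general (p : ℝ) (hp : 1 < p) (n : ℕ)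
    (yt : Fin n → ℝ) (i : Fin n) (y' : ℝ) (h : yt i < y') (z₁ z₂ : ℝ)
    (h₁ : ∀ w : ℝ, ∑ j, |yt j - z₁| ^ p ≤ ∑ j, |yt j - w| ^ p)
    (h₂ : ∀ w : ℝ, ∑ j, |Function.update yt i y' j - z₂| ^ p
        ≤ ∑ j, |Function.update yt i y' j - w| ^ p) :
    z₁ < z₂ := by
  by_contra! hz
  set u := Function.update yt i y'
  have hφ := strictMono_abs_rpow_sub_two_mul hp
  have hle : yt ≤ u := fun j ↦ by
    rcases eq_or_ne j i with rfl | hj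
    · simpa [u] using h.le
    · simp [u, hj]
  have hlt : ∑ j, |yt j - z₁| ^ (p - 2) * (yt j - z₁) < ∑ j, |u j - z₂| ^ (p - 2) * (u j - z₂) :=
    sum_lt_sum (fun j _ ↦ hφ.monotone (by linarith [hle j]))
      ⟨i, mem_univ i, hφ (by simp only [u, Function.update_self]; linarith)⟩
  rw [sum_abs_rpow_sub_two_mul_eq_zero_of_isMinOn hp yt h₁,
    sum_abs_rpow_sub_two_mul_eq_zero_of_isMinOn hp u h₂] at hlt
  exact hlt.false

theorem lp_minimizer_strictly_increasing (p : ℝ) (hp : 1 < p) (n : ℕ) (hn : 1 ≤ n)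
    (yt : Fin n → ℝ) (i : Fin n) (y' : ℝ) (h : yt i < y') (z₁ z₂ : ℝ)
    (h₁ : ∀ w : ℝ, ∑ j, |yt j - z₁| ^ p ≤ ∑ j, |yt j - w| ^ p)
    (h₂ : ∀ w : ℝ, ∑ j, |Function.update yt i y' j - z₂| ^ p
        ≤ ∑ j, |Function.update yt i y' j - w| ^ p) :
    z₁ < z₂ :=
  lp_minimizer_strictly_increasing_general p hp n yt i y' h z₁ z₂ h₁ h₂
end

section
/- Under the average rule f(ỹ₁,...,ỹₙ) = (1/n)Σᵢ ỹᵢ with reports in [0,1] and agents having single-peaked preferences with peaks yᵢ, a profile ỹ is a pure Nash equilibrium if and only if for each i: (f(ỹ) < yᵢ and ỹᵢ = 1), or (f(ỹ) > yᵢ and ỹᵢ = 0), or f(ỹ) = yᵢ. -/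
/-!
Fixing the other reports, agent `i` moves the average through `t ↦ (t + r) / n`, a continuous
strictly increasing function of her own report `t ∈ [0, 1]`. By the intermediate value theorem she
can move the outcome strictly towards her peak, without overshooting it, unless the outcome already
is the peak or her report already sits at the end of `[0, 1]` on the side of the peak.
-/

open Set Finset

/-- A single-peaked agent with peak `p` strictly prefers outcome `b` to outcome `a`. -/
def IsImprovement {δ : Type*} [LinearOrder δ] (p a b : δ) : Prop :=
  (a < b ∧ b ≤ p) ∨ (b < a ∧ p ≤ b)

section Order

variable {α δ : Type*} [Preorder α] [LinearOrder δ] {g : α → δ} {s : Set α} {x t : α} {p : δ}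

theorem not_isImprovement_of_isGreatest (hg : MonotoneOn g s) (hx : IsGreatest s x)
    (hp : g x < p) (ht : t ∈ s) : ¬ IsImprovement p (g x) (g t) := by
  have hgt := hg ht hx.1 (hx.2 ht)
  rintro (⟨h₁, -⟩ | ⟨h₁, h₂⟩)
  · exact h₁.not_ge hgt
  · exact (h₂.trans_lt h₁).not_gt hp

theorem not_isImprovement_of_isLeast (hg : MonotoneOn g s) (hx : IsLeast s x)
    (hp : p < g x) (ht : t ∈ s) : ¬ IsImprovement p (g x) (g t) := by
  have hgt := hg hx.1 ht (hx.2 ht)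
  rintro (⟨h₁, h₂⟩ | ⟨h₁, -⟩)
  · exact (h₁.trans_le h₂).not_gt hp
  · exact h₁.not_ge hgt

theorem not_isImprovement_self (a b : δ) : ¬ IsImprovement a a b := by
  rintro (⟨h₁, h₂⟩ | ⟨h₁, h₂⟩)
  · exact h₁.not_ge h₂
  · exact h₁.not_ge h₂

end Order

section BestResponse

variable {α δ : Type*} [ConditionallyCompleteLinearOrder α] [TopologicalSpace α] [OrderTopology α]
  [DenselyOrdered α] [LinearOrder δ] [TopologicalSpace δ] [OrderClosedTopology δ]
  {g : α → δ} {a b x : α} {p : δ}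

theorem exists_isImprovement_of_lt_of_lt (hg : StrictMonoOn g (Icc a b))
    (hgc : ContinuousOn g (Icc a b)) (hx : x ∈ Icc a b) (hxb : x < b) (hp : g x < p) :
    ∃ t ∈ Icc a b, IsImprovement p (g x) (g t) := by
  have hgb : g x < g b := hg hx ⟨hx.1.trans hxb.le, le_rfl⟩ hxb
  obtain ⟨t, ht, hgt⟩ := intermediate_value_Icc hxb.le (hgc.mono (Icc_subset_Icc hx.1 le_rfl))
    ⟨le_min hp.le hgb.le, min_le_right p (g b)⟩
  exact ⟨t, ⟨hx.1.trans ht.1, ht.2⟩, .inl ⟨hgt ▸ lt_min hp hgb, hgt ▸ min_le_left _ _⟩⟩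

theorem exists_isImprovement_of_lt_of_gt (hg : StrictMonoOn g (Icc a b))
    (hgc : ContinuousOn g (Icc a b)) (hx : x ∈ Icc a b) (hax : a < x) (hp : p < g x) :
    ∃ t ∈ Icc a b, IsImprovement p (g x) (g t) := by
  have hga : g a < g x := hg ⟨le_rfl, hax.le.trans hx.2⟩ hx hax
  obtain ⟨t, ht, hgt⟩ := intermediate_value_Icc hax.le (hgc.mono (Icc_subset_Icc le_rfl hx.2))
    ⟨le_max_right p (g a), max_le hp.le hga.le⟩
  exact ⟨t, ⟨ht.1, ht.2.trans hx.2⟩, .inr ⟨hgt ▸ max_lt hp hga, hgt ▸ le_max_left _ _⟩⟩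

theorem forall_not_isImprovement_iff (hg : StrictMonoOn g (Icc a b))
    (hgc : ContinuousOn g (Icc a b)) (hx : x ∈ Icc a b) :
    (∀ t ∈ Icc a b, ¬ IsImprovement p (g x) (g t)) ↔
      (g x < p ∧ x = b) ∨ (p < g x ∧ x = a) ∨ g x = p := by
  constructor
  · intro h
    rcases lt_trichotomy (g x) p with hp | hp | hp
    · refine .inl ⟨hp, not_not.1 fun hxb => ?_⟩
      obtain ⟨t, ht, hi⟩ := exists_isImprovement_of_lt_of_lt hg hgc hx (hx.2.lt_of_ne hxb) hp
      exact h t ht hi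
    · exact .inr (.inr hp)
    · refine .inr (.inl ⟨hp, not_not.1 fun hax => ?_⟩)
      obtain ⟨t, ht, hi⟩ :=
        exists_isImprovement_of_lt_of_gt hg hgc hx (hx.1.lt_of_ne (Ne.symm hax)) hp
      exact h t ht hi
  · rintro (⟨hp, rfl⟩ | ⟨hp, rfl⟩ | rfl) t ht
    · exact not_isImprovement_of_isGreatest hg.monotoneOn ⟨hx, fun _ h => h.2⟩ hp ht
    · exact not_isImprovement_of_isLeast hg.monotoneOn ⟨hx, fun _ h => h.1⟩ hp ht
    · exact not_isImprovement_self _ _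

end BestResponse

theorem average_rule_pne_characterization_general (n : ℕ)
    (y yt : Fin n → ℝ)
    (hyt : ∀ i, yt i ∈ Set.Icc (0 : ℝ) 1) :
    (∀ i : Fin n, ∀ t ∈ Set.Icc (0 : ℝ) 1,
      ¬ (((∑ j, yt j) / n < (∑ j, Function.update yt i t j) / n ∧
            (∑ j, Function.update yt i t j) / n ≤ y i) ∨
         ((∑ j, Function.update yt i t j) / n < (∑ j, yt j) / n ∧
            y i ≤ (∑ j, Function.update yt i t j) / n)))
    ↔
    (∀ i : Fin n,
      ((∑ j, yt j) / n < y i ∧ yt i = 1) ∨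
      (y i < (∑ j, yt j) / n ∧ yt i = 0) ∨
      (∑ j, yt j) / n = y i) := by
  refine forall_congr' fun i => ?_
  have hn : (0 : ℝ) < n := by exact_mod_cast i.pos
  set g : ℝ → ℝ := fun t => (t + ∑ j ∈ univ \ {i}, yt j) / n
  have hupdate : ∀ t, (∑ j, Function.update yt i t j) / n = g t := fun t => by
    rw [sum_update_of_mem (mem_univ i)]
  have hself : (∑ j, yt j) / n = g (yt i) := by
    rw [← hupdate, Function.update_eq_self]
  simp_rw [hself, hupdate]
  have hmono : StrictMono g := fun _ _ hab => div_lt_div_of_pos_right (add_lt_add_left hab _) hn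
  exact forall_not_isImprovement_iff (hmono.strictMonoOn _) (by fun_prop) (hyt i)

theorem average_rule_pne_characterization (n : ℕ) (hn : 1 ≤ n)
    (y yt : Fin n → ℝ)
    (hy : ∀ i, y i ∈ Set.Icc (0 : ℝ) 1)
    (hyt : ∀ i, yt i ∈ Set.Icc (0 : ℝ) 1) :
    (∀ i : Fin n, ∀ t ∈ Set.Icc (0 : ℝ) 1,
      ¬ (((∑ j, yt j) / n < (∑ j, Function.update yt i t j) / n ∧
            (∑ j, Function.update yt i t j) / n ≤ y i) ∨
         ((∑ j, Function.update yt i t j) / n < (∑ j, yt j) / n ∧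
            y i ≤ (∑ j, Function.update yt i t j) / n)))
    ↔
    (∀ i : Fin n,
      ((∑ j, yt j) / n < y i ∧ yt i = 1) ∨
      (y i < (∑ j, yt j) / n ∧ yt i = 0) ∨
      (∑ j, yt j) / n = y i) :=
  average_rule_pne_characterization_general n y yt hyt
end

section
/- Let p > 1 and suppose β* uniquely minimizes β ↦ |ỹ¹ - βᵀx|^p + Σ_{j≠i} |ỹⱼ - βᵀxⱼ|^p + R(β) over β ∈ ℝ^d, where R is differentiable and x ≠ 0. If the same β* also minimizes the loss with ỹ¹ replaced by ỹ² (all else equal), then ỹ¹ = ỹ². -/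
/-!
Both losses have the form `β ↦ |y - ℓ β| ^ p + F β` with the same differentiable `F` and the
nonzero linear form `ℓ β = βᵀx`. At the common minimizer the first-order conditions read
`p g(y - ℓ β*) • ℓ = F'(β*)` for `g t = |t| ^ (p - 2) * t`, so `g` takes the same value at
`ỹ¹ - ℓ β*` and `ỹ² - ℓ β*`; and `g` is injective because `|g t| = |t| ^ (p - 1)` and `g t` has
the sign of `t`.
-/

lemma abs_rpow_sub_two_mul_self_injective {p : ℝ} (hp : 1 < p) :
    Function.Injective fun t : ℝ => |t| ^ (p - 2) * t := by
  have habs : ∀ t : ℝ, |(|t| ^ (p - 2) * t)| = |t| ^ (p - 1) := by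
    intro t
    rcases eq_or_ne t 0 with rfl | ht
    · simp [Real.zero_rpow (by linarith : p - 1 ≠ 0)]
    · rw [abs_mul, abs_of_nonneg (by positivity), show p - 1 = p - 2 + 1 by ring,
        Real.rpow_add_one (abs_ne_zero.mpr ht)]
  intro s t (hst : |s| ^ (p - 2) * s = |t| ^ (p - 2) * t)
  have hst_abs : |s| = |t| := by
    refine Real.rpow_left_injOn (by linarith : p - 1 ≠ 0) (abs_nonneg s) (abs_nonneg t) ?_
    change |s| ^ (p - 1) = |t| ^ (p - 1)
    rw [← habs, ← habs, hst]
  rcases eq_or_ne s 0 with rfl | hs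
  · simpa [eq_comm] using hst_abs
  · rw [hst_abs] at hst
    exact mul_left_cancel₀ (Real.rpow_pos_of_pos (hst_abs ▸ abs_pos.mpr hs) _).ne' hst

lemma hasDerivAt_eq_of_isLocalMin_comp_sub_add {E : Type*} [NormedAddCommGroup E]
    [NormedSpace ℝ E] {φ : ℝ → ℝ} {φ₁ φ₂ y₁ y₂ : ℝ} {ℓ : E →L[ℝ] ℝ}
    {F : E → ℝ} {b : E} (hℓ : ℓ ≠ 0) (hF : DifferentiableAt ℝ F b)
    (hφ₁ : HasDerivAt φ φ₁ (y₁ - ℓ b)) (hφ₂ : HasDerivAt φ φ₂ (y₂ - ℓ b))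
    (h₁ : IsLocalMin (fun β => φ (y₁ - ℓ β) + F β) b)
    (h₂ : IsLocalMin (fun β => φ (y₂ - ℓ β) + F β) b) : φ₁ = φ₂ := by
  have hcrit : ∀ {y φ' : ℝ}, HasDerivAt φ φ' (y - ℓ b) →
      IsLocalMin (fun β => φ (y - ℓ β) + F β) b → φ' • ℓ = fderiv ℝ F b := by
    intro y φ' hφ hmin
    have hderiv := (hφ.comp_hasFDerivAt b ((hasFDerivAt_const y b).sub ℓ.hasFDerivAt)).add
      hF.hasFDerivAt
    have := hmin.hasFDerivAt_eq_zero hderiv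
    rwa [zero_sub, smul_neg, neg_add_eq_zero] at this
  have h : (φ₁ - φ₂) • ℓ = 0 := by rw [sub_smul φ₁ φ₂ ℓ, hcrit hφ₁ h₁, hcrit hφ₂ h₂, sub_self]
  exact sub_eq_zero.mp ((smul_eq_zero.mp h).resolve_right hℓ)

theorem beta_cant_be_same_general (p : ℝ) (hp : 1 < p) (d n : ℕ) (i : Fin n)
    (x : Fin d → ℝ) (hx : x ≠ 0) (xs : Fin n → Fin d → ℝ)
    (yt : Fin n → ℝ) (yt1 yt2 : ℝ)
    (R : (Fin d → ℝ) → ℝ)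
    (hRdiff : Differentiable ℝ R)
    (βstar : Fin d → ℝ)
    (h₁ : ∀ β : Fin d → ℝ, β ≠ βstar →
      |yt1 - ∑ j, βstar j * x j| ^ p
        + ∑ k ∈ Finset.univ.erase i, |yt k - ∑ j, βstar j * xs k j| ^ p + R βstar
      < |yt1 - ∑ j, β j * x j| ^ p
        + ∑ k ∈ Finset.univ.erase i, |yt k - ∑ j, β j * xs k j| ^ p + R β)
    (h₂ : ∀ β : Fin d → ℝ,
      |yt2 - ∑ j, βstar j * x j| ^ p
        + ∑ k ∈ Finset.univ.erase i, |yt k - ∑ j, βstar j * xs k j| ^ p + R βstar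
      ≤ |yt2 - ∑ j, β j * x j| ^ p
        + ∑ k ∈ Finset.univ.erase i, |yt k - ∑ j, β j * xs k j| ^ p + R β) :
    yt1 = yt2 := by
  set ℓ : (Fin d → ℝ) →L[ℝ] ℝ := ∑ j, (ContinuousLinearMap.proj j).smulRight (x j)
  have hℓ : ∀ β, ℓ β = ∑ j, β j * x j := by simp [ℓ]
  have hℓ0 : ℓ ≠ 0 := fun h => hx <| funext fun j => by
    simpa [hℓ, Pi.single_apply] using congr($h (Pi.single j 1))
  have hF : DifferentiableAt ℝ
      (fun β => ∑ k ∈ Finset.univ.erase i, |yt k - ∑ j, β j * xs k j| ^ p + R β) βstar := by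
    have habs : Differentiable ℝ fun u : ℝ => |u| ^ p :=
      fun u => (hasDerivAt_abs_rpow u hp).differentiableAt
    exact (DifferentiableAt.fun_sum fun k _ => habs.differentiableAt.comp βstar (by fun_prop)).add
      (hRdiff βstar)
  have key := hasDerivAt_eq_of_isLocalMin_comp_sub_add hℓ0 hF
    (hasDerivAt_abs_rpow _ hp) (hasDerivAt_abs_rpow _ hp)
    (Filter.Eventually.of_forall fun β => by
      rcases eq_or_ne β βstar with rfl | hβ
      · exact le_rfl
      · simpa only [hℓ, add_assoc] using (h₁ β hβ).le)
    (Filter.Eventually.of_forall fun β => by simpa only [hℓ, add_assoc] using h₂ β)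
  rw [mul_assoc, mul_assoc] at key
  have := abs_rpow_sub_two_mul_self_injective hp (mul_left_cancel₀ (by linarith) key)
  linarith

theorem beta_cant_be_same (p : ℝ) (hp : 1 < p) (d n : ℕ) (i : Fin n)
    (x : Fin d → ℝ) (hx : x ≠ 0) (xs : Fin n → Fin d → ℝ)
    (yt : Fin n → ℝ) (yt1 yt2 : ℝ)
    (R : (Fin d → ℝ) → ℝ) (hRconv : ConvexOn ℝ Set.univ R)
    (hRdiff : Differentiable ℝ R)
    (βstar : Fin d → ℝ)
    (h₁ : ∀ β : Fin d → ℝ, β ≠ βstar →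
      |yt1 - ∑ j, βstar j * x j| ^ p
        + ∑ k ∈ Finset.univ.erase i, |yt k - ∑ j, βstar j * xs k j| ^ p + R βstar
      < |yt1 - ∑ j, β j * x j| ^ p
        + ∑ k ∈ Finset.univ.erase i, |yt k - ∑ j, β j * xs k j| ^ p + R β)
    (h₂ : ∀ β : Fin d → ℝ,
      |yt2 - ∑ j, βstar j * x j| ^ p
        + ∑ k ∈ Finset.univ.erase i, |yt k - ∑ j, βstar j * xs k j| ^ p + R βstar
      ≤ |yt2 - ∑ j, β j * x j| ^ p
        + ∑ k ∈ Finset.univ.erase i, |yt k - ∑ j, β j * xs k j| ^ p + R β) :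
    yt1 = yt2 :=
  beta_cant_be_same_general p hp d n i x hx xs yt yt1 yt2 R hRdiff βstar h₁ h₂
end

section
/- Let n points lie on the four x-positions 0, (1-ε)/2, (1+ε)/2, 1 (for 0 < ε < 1) with y-values 0, (1-ε)/2 + a, (1+ε)/2 - a, 1 for some a > 0, and let ȳ^{OLS} be the ordinary least squares fit. Then the residual at x = 0 equals aε/(1+ε²) and the residual at x = (1-ε)/2 equals a/(1+ε²). -/
/-!
At a least-squares fit the residuals are orthogonal to the constant vector and to the
regressor: otherwise moving the intercept or the slope a little would lower the sum of
squares, which is a quadratic in that parameter. For the four points these two normal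
equations determine the line `y = (1 - 2aε/(1+ε²)) x + aε/(1+ε²)`, and the residuals are
read off from it.
-/

open Finset

namespace LeastSquares

variable {ι : Type*} [Fintype ι] (x y : ι → ℝ)

def residual (m c : ℝ) (i : ι) : ℝ := y i - (m * x i + c)

def sumSqResiduals (m c : ℝ) : ℝ := ∑ i, residual x y m c i ^ 2

lemma eq_zero_of_forall_quadratic_nonneg {a b : ℝ} (h : ∀ t : ℝ, 0 ≤ a * (t * t) + b * t) :
    b = 0 := by
  have hdisc := discrim_le_zero (c := (0 : ℝ)) (by simpa using h)
  rw [discrim, mul_zero, sub_zero] at hdisc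
  exact pow_eq_zero_iff two_ne_zero |>.mp (le_antisymm hdisc (sq_nonneg b))

lemma sumSqResiduals_add_intercept (m c t : ℝ) :
    sumSqResiduals x y m (c + t) = sumSqResiduals x y m c
      + (Fintype.card ι * (t * t) + (-2 * ∑ i, residual x y m c i) * t) := by
  have hterm : ∀ i, residual x y m (c + t) i ^ 2
      = residual x y m c i ^ 2 + (t * t + (-2 * residual x y m c i) * t) := fun i => by
    simp only [residual]
    ring
  simp only [sumSqResiduals, hterm, sum_add_distrib, ← sum_mul, ← mul_sum, sum_const, card_univ,
    nsmul_eq_mul, mul_assoc]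

lemma sumSqResiduals_add_slope (m c t : ℝ) :
    sumSqResiduals x y (m + t) c = sumSqResiduals x y m c
      + ((∑ i, x i ^ 2) * (t * t) + (-2 * ∑ i, x i * residual x y m c i) * t) := by
  simp only [sumSqResiduals, mul_sum, sum_mul, ← sum_add_distrib]
  refine sum_congr rfl fun i _ => ?_
  simp only [residual]
  ring

def IsFit (m c : ℝ) : Prop := ∀ m' c', sumSqResiduals x y m c ≤ sumSqResiduals x y m' c'

variable {x y} {m c : ℝ}

theorem IsFit.sum_residual_eq_zero (hmin : IsFit x y m c) : ∑ i, residual x y m c i = 0 := by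
  have hfirstOrder : -2 * ∑ i, residual x y m c i = 0 :=
    eq_zero_of_forall_quadratic_nonneg (a := Fintype.card ι) fun t => by
      linarith [sumSqResiduals_add_intercept x y m c t ▸ hmin m (c + t)]
  linarith

theorem IsFit.sum_mul_residual_eq_zero (hmin : IsFit x y m c) :
    ∑ i, x i * residual x y m c i = 0 := by
  have hfirstOrder : -2 * ∑ i, x i * residual x y m c i = 0 :=
    eq_zero_of_forall_quadratic_nonneg (a := ∑ i, x i ^ 2) fun t => by
      linarith [sumSqResiduals_add_slope x y m c t ▸ hmin (m + t) c]
  linarith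

end LeastSquares

theorem ols_residuals_four_points_general (ε a m c : ℝ)
    (hε : 0 < ε) (ha : 0 < a)
    (hmin : ∀ m' c' : ℝ,
      (0 - (m * 0 + c)) ^ 2
        + ((1 - ε) / 2 + a - (m * ((1 - ε) / 2) + c)) ^ 2
        + ((1 + ε) / 2 - a - (m * ((1 + ε) / 2) + c)) ^ 2
        + (1 - (m * 1 + c)) ^ 2
      ≤ (0 - (m' * 0 + c')) ^ 2
        + ((1 - ε) / 2 + a - (m' * ((1 - ε) / 2) + c')) ^ 2
        + ((1 + ε) / 2 - a - (m' * ((1 + ε) / 2) + c')) ^ 2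
        + (1 - (m' * 1 + c')) ^ 2) :
    |0 - (m * 0 + c)| = a * ε / (1 + ε ^ 2) ∧
    |(1 - ε) / 2 + a - (m * ((1 - ε) / 2) + c)| = a / (1 + ε ^ 2) := by
  set x : Fin 4 → ℝ := ![0, (1 - ε) / 2, (1 + ε) / 2, 1]
  set y : Fin 4 → ℝ := ![0, (1 - ε) / 2 + a, (1 + ε) / 2 - a, 1]
  have hfit : LeastSquares.IsFit x y m c := by
    simpa [LeastSquares.IsFit, LeastSquares.sumSqResiduals, LeastSquares.residual,
      Fin.sum_univ_four, x, y] using hmin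
  have hsum : 2 - 2 * m - 4 * c = 0 := by
    have := hfit.sum_residual_eq_zero
    simp only [LeastSquares.residual, Fin.sum_univ_four, x, y, Matrix.cons_val] at this
    linear_combination this
  have hmoment : (3 + ε ^ 2) / 2 - a * ε - (3 + ε ^ 2) / 2 * m - 2 * c = 0 := by
    have := hfit.sum_mul_residual_eq_zero
    simp only [LeastSquares.residual, Fin.sum_univ_four, x, y, Matrix.cons_val] at this
    linear_combination this
  have hD : 0 < 1 + ε ^ 2 := by positivity
  have hc : c = a * ε / (1 + ε ^ 2) := by
    field_simp
    linear_combination (-(3 + ε ^ 2) / 4) * hsum + hmoment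
  have hm : m = 1 - 2 * a * ε / (1 + ε ^ 2) := by
    field_simp
    linear_combination hsum - 2 * hmoment
  have hr : (1 - ε) / 2 + a - (m * ((1 - ε) / 2) + c) = a / (1 + ε ^ 2) := by
    rw [hm, hc]
    field_simp
    ring
  refine ⟨?_, ?_⟩
  · rw [zero_sub, abs_neg, mul_zero, zero_add, hc, abs_of_pos (by positivity)]
  · rw [hr, abs_of_pos (by positivity)]

theorem ols_residuals_four_points (ε a m c : ℝ)
    (hε : 0 < ε) (hε1 : ε < 1) (ha : 0 < a)
    (hmin : ∀ m' c' : ℝ,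
      (0 - (m * 0 + c)) ^ 2
        + ((1 - ε) / 2 + a - (m * ((1 - ε) / 2) + c)) ^ 2
        + ((1 + ε) / 2 - a - (m * ((1 + ε) / 2) + c)) ^ 2
        + (1 - (m * 1 + c)) ^ 2
      ≤ (0 - (m' * 0 + c')) ^ 2
        + ((1 - ε) / 2 + a - (m' * ((1 - ε) / 2) + c')) ^ 2
        + ((1 + ε) / 2 - a - (m' * ((1 + ε) / 2) + c')) ^ 2
        + (1 - (m' * 1 + c')) ^ 2) :
    |0 - (m * 0 + c)| = a * ε / (1 + ε ^ 2) ∧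
    |(1 - ε) / 2 + a - (m * ((1 - ε) / 2) + c)| = a / (1 + ε ^ 2) :=
  ols_residuals_four_points_general ε a m c hε ha hmin
end
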